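/- arXiv:1201.5761 — 4 statements merged into one kernel-verified Lean document; each statement's English description precedes it below -/
import Mathlib

section
/- Let E and F be nonzero finite-dimensional complex inner product spaces, a : E → F and b : F → F continuous linear maps with b invertible, a† the adjoint of a, κ = ‖a‖²‖b⁻¹‖². Assume N := a† b⁻¹ a is self-adjoint and there is μ > 0 with re⟨v, N v⟩ ≤ −μ‖v‖² for all v ∈ E. Set α = min(‖b⁻¹‖⁻¹/2, μ/(4κ)). Then for every z ∈ ℂ with re z ≥ 0 and |z| ≤ α: the maps b − z·id, z·id − a†(b − z·id)⁻¹a, and z·id − N are all invertible; the resolvent difference S(z) = (z·id − a†(b − z·id)⁻¹a)⁻¹ − (z·id − N)⁻¹ satisfies ‖S(z)‖ ≤ 4κμ⁻²|z|; and if in addition z ≠ 0 then also ‖S(z)‖ ≤ 4κ|z|⁻¹. -/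
/-!
Write `B = b - z`, `T = z - a†B⁻¹a` and `V = z - N`. Since `‖z‖ ≤ ‖b⁻¹‖⁻¹/2`, `B` is a small
perturbation of `b`: `‖B⁻¹‖ ≤ 2‖b⁻¹‖`, so `B⁻¹ - b⁻¹ = B⁻¹ (b - B) b⁻¹` has norm at most
`2‖b⁻¹‖²‖z‖` and `‖V - T‖ ≤ 2κ‖z‖ ≤ μ/2`. As `N` is self-adjoint, `⟨v, (z - N) v⟩ = z‖v‖² - c`
with `c` real and `c ≤ -μ‖v‖²`; for `re z ≥ 0` its modulus is at least `max μ ‖z‖ · ‖v‖²`, so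
`V` is bounded below by `m = max μ ‖z‖` and hence `T` by `m/2`. The second resolvent identity
`T⁻¹ - V⁻¹ = T⁻¹ (V - T) V⁻¹` then gives `‖S(z)‖ ≤ 4κ‖z‖/m²`.
-/

noncomputable section

variable {E F : Type*} [NormedAddCommGroup E] [InnerProductSpace ℂ E]
  [FiniteDimensional ℂ E] [NormedAddCommGroup F] [InnerProductSpace ℂ F]
  [FiniteDimensional ℂ F]

/-- The resolvent difference `S(z)`: the population block
`(z·id − a†(b − z·id)⁻¹a)⁻¹` of the quantum-network resolvent minus the kinetic-network
resolvent `(z·id − a†b⁻¹a)⁻¹`. -/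
def resolventDiff (a : E →L[ℂ] F) (b : F →L[ℂ] F) (z : ℂ) : E →L[ℂ] E :=
  Ring.inverse (z • (1 : E →L[ℂ] E) -
      (ContinuousLinearMap.adjoint a).comp
        ((Ring.inverse (b - z • (1 : F →L[ℂ] F))).comp a)) -
  Ring.inverse (z • (1 : E →L[ℂ] E) -
      (ContinuousLinearMap.adjoint a).comp ((Ring.inverse b).comp a))

open scoped Ring

section NormedRing

variable {R : Type*} [NormedRing R]

theorem norm_inverse_sub_inverse_le {a b : R} (h : IsUnit a ↔ IsUnit b) :
    ‖a⁻¹ʳ - b⁻¹ʳ‖ ≤ ‖a⁻¹ʳ‖ * ‖b - a‖ * ‖b⁻¹ʳ‖ := by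
  rw [Ring.inverse_sub_inverse h]
  exact norm_mul₃_le

variable [HasSummableGeomSeries R]

theorem isUnit_sub_of_norm_inverse_mul_norm_lt_one {b x : R} (hb : IsUnit b)
    (hx : ‖b⁻¹ʳ‖ * ‖x‖ < 1) : IsUnit (b - x) := by
  have hfactor : b - x = b * (1 - b⁻¹ʳ * x) := by
    rw [mul_sub, mul_one, ← mul_assoc, Ring.mul_inverse_cancel b hb, one_mul]
  rw [hfactor]
  exact hb.mul (isUnit_one_sub_of_norm_lt_one ((norm_mul_le _ _).trans_lt hx))

theorem norm_inverse_sub_le_two_mul {b x : R} (hb : IsUnit b) (hx : ‖b⁻¹ʳ‖ * ‖x‖ ≤ 1 / 2) :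
    ‖(b - x)⁻¹ʳ‖ ≤ 2 * ‖b⁻¹ʳ‖ := by
  have hbx := isUnit_sub_of_norm_inverse_mul_norm_lt_one hb (hx.trans_lt (by norm_num))
  have hdiff := norm_inverse_sub_inverse_le (iff_of_true hbx hb)
  rw [sub_sub_cancel] at hdiff
  have hsmall : ‖(b - x)⁻¹ʳ‖ * ‖x‖ * ‖b⁻¹ʳ‖ ≤ ‖(b - x)⁻¹ʳ‖ / 2 := by
    rw [mul_assoc, mul_comm ‖x‖]
    nlinarith [norm_nonneg (b - x)⁻¹ʳ]
  linarith [norm_sub_norm_le (b - x)⁻¹ʳ b⁻¹ʳ]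

theorem norm_inverse_sub_sub_inverse_le {b x : R} (hb : IsUnit b)
    (hx : ‖b⁻¹ʳ‖ * ‖x‖ ≤ 1 / 2) : ‖(b - x)⁻¹ʳ - b⁻¹ʳ‖ ≤ 2 * ‖b⁻¹ʳ‖ ^ 2 * ‖x‖ := by
  have hbx := isUnit_sub_of_norm_inverse_mul_norm_lt_one hb (hx.trans_lt (by norm_num))
  calc ‖(b - x)⁻¹ʳ - b⁻¹ʳ‖ ≤ ‖(b - x)⁻¹ʳ‖ * ‖x‖ * ‖b⁻¹ʳ‖ := by
        simpa only [sub_sub_cancel] using norm_inverse_sub_inverse_le (iff_of_true hbx hb)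
    _ ≤ 2 * ‖b⁻¹ʳ‖ * ‖x‖ * ‖b⁻¹ʳ‖ := by gcongr; exact norm_inverse_sub_le_two_mul hb hx
    _ = 2 * ‖b⁻¹ʳ‖ ^ 2 * ‖x‖ := by ring

end NormedRing

namespace ContinuousLinearMap

variable {𝕜 G : Type*} [NontriviallyNormedField 𝕜] [NormedAddCommGroup G] [NormedSpace 𝕜 G]

theorem isUnit_of_boundedBelow [CompleteSpace 𝕜] [FiniteDimensional 𝕜 G] {T : G →L[𝕜] G}
    {c : ℝ} (hc : 0 < c) (hT : ∀ v, c * ‖v‖ ≤ ‖T v‖) : IsUnit T := by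
  have : CompleteSpace G := FiniteDimensional.complete 𝕜 G
  have hinj : Function.Injective T := by
    refine (injective_iff_map_eq_zero T).mpr fun v hv => norm_le_zero_iff.mp ?_
    have := hT v
    rw [hv, norm_zero] at this
    exact nonpos_of_mul_nonpos_right this hc
  exact isUnit_iff_bijective.mpr ⟨hinj, LinearMap.injective_iff_surjective.mp hinj⟩

theorem norm_inverse_le_of_boundedBelow {T : G →L[𝕜] G} (hTu : IsUnit T) {c : ℝ} (hc : 0 < c)
    (hT : ∀ v, c * ‖v‖ ≤ ‖T v‖) : ‖T⁻¹ʳ‖ ≤ c⁻¹ := by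
  refine opNorm_le_bound _ (by positivity) fun w => ?_
  have hw : T (T⁻¹ʳ w) = w := by
    rw [← mul_apply_eq_comp, Ring.mul_inverse_cancel T hTu, one_apply_eq_self]
  rw [inv_mul_eq_div, le_div_iff₀' hc]
  simpa only [hw] using hT (T⁻¹ʳ w)

theorem boundedBelow_of_norm_sub_le {V T : G →L[𝕜] G} {c : ℝ} (hV : ∀ v, c * ‖v‖ ≤ ‖V v‖)
    (v : G) : (c - ‖V - T‖) * ‖v‖ ≤ ‖T v‖ := by
  have h := le_opNorm (V - T) v
  rw [sub_apply] at h
  nlinarith [hV v, norm_sub_norm_le (V v) (T v)]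

theorem isUnit_and_norm_inverse_sub_inverse_le_of_boundedBelow [CompleteSpace 𝕜]
    [FiniteDimensional 𝕜 G] {V T : G →L[𝕜] G} {m : ℝ} (hm : 0 < m)
    (hV : ∀ v, m * ‖v‖ ≤ ‖V v‖) (hVT : ‖V - T‖ ≤ m / 2) :
    IsUnit T ∧ ‖T⁻¹ʳ - V⁻¹ʳ‖ ≤ 2 * ‖V - T‖ / m ^ 2 := by
  have hT (v : G) : m / 2 * ‖v‖ ≤ ‖T v‖ :=
    le_trans (by gcongr; linarith) (boundedBelow_of_norm_sub_le hV v)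
  have hVu := isUnit_of_boundedBelow hm hV
  have hTu := isUnit_of_boundedBelow (half_pos hm) hT
  refine ⟨hTu, ?_⟩
  calc ‖T⁻¹ʳ - V⁻¹ʳ‖ ≤ ‖T⁻¹ʳ‖ * ‖V - T‖ * ‖V⁻¹ʳ‖ :=
        norm_inverse_sub_inverse_le (iff_of_true hTu hVu)
    _ ≤ (m / 2)⁻¹ * ‖V - T‖ * m⁻¹ := by
        gcongr
        · exact norm_inverse_le_of_boundedBelow hTu (half_pos hm) hT
        · exact norm_inverse_le_of_boundedBelow hVu hm hV
    _ = 2 * ‖V - T‖ / m ^ 2 := by field_simp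

end ContinuousLinearMap

theorem Complex.norm_mul_le_norm_mul_ofReal_sub {z : ℂ} {r c : ℝ} (hz : 0 ≤ z.re) (hr : 0 ≤ r)
    (hc : c ≤ 0) : ‖z‖ * r ≤ ‖z * r - c‖ := by
  refine (pow_le_pow_iff_left₀ (by positivity) (norm_nonneg _) two_ne_zero).mp ?_
  rw [mul_pow, Complex.sq_norm, Complex.sq_norm, Complex.normSq_apply, Complex.normSq_apply]
  simp only [Complex.sub_re, Complex.sub_im, Complex.mul_re, Complex.mul_im, Complex.ofReal_re,
    Complex.ofReal_im, mul_zero, sub_zero]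
  nlinarith [mul_nonneg (mul_nonneg hz hr) (neg_nonneg.mpr hc), sq_nonneg c]

open ContinuousLinearMap

theorem max_mul_norm_le_norm_smul_one_sub_apply {G : Type*} [NormedAddCommGroup G]
    [InnerProductSpace ℂ G] [CompleteSpace G] {N : G →L[ℂ] G} (hN : IsSelfAdjoint N) {μ : ℝ}
    (hμ : 0 ≤ μ) (hNneg : ∀ v : G, (inner ℂ v (N v)).re ≤ -μ * ‖v‖ ^ 2) {z : ℂ}
    (hz : 0 ≤ z.re) (v : G) :
    max μ ‖z‖ * ‖v‖ ≤ ‖(z • (1 : G →L[ℂ] G) - N) v‖ := by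
  rcases (norm_nonneg v).eq_or_lt with hv | hv
  · rw [← hv, mul_zero]; exact norm_nonneg _
  set c := (inner ℂ v (N v)).re
  have hc : c ≤ -μ * ‖v‖ ^ 2 := hNneg v
  have hreal : (c : ℂ) = inner ℂ v (N v) := hN.isSymmetric.coe_re_inner_self_apply v
  have hinner : inner ℂ v ((z • (1 : G →L[ℂ] G) - N) v) = z * ((‖v‖ ^ 2 : ℝ) : ℂ) - c := by
    rw [sub_apply, inner_sub_right, smul_apply, one_apply_eq_self, inner_smul_right,
      inner_self_eq_norm_sq_to_K, hreal]
    push_cast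
    rfl
  have hkey : max μ ‖z‖ * ‖v‖ ^ 2 ≤ ‖z * ((‖v‖ ^ 2 : ℝ) : ℂ) - c‖ := by
    rw [max_mul_of_nonneg _ _ (by positivity)]
    refine max_le ?_ (Complex.norm_mul_le_norm_mul_ofReal_sub hz (by positivity)
      (hc.trans (by nlinarith)))
    refine le_trans ?_ (Complex.re_le_norm _)
    simp only [Complex.sub_re, Complex.mul_re, Complex.ofReal_re, Complex.ofReal_im, mul_zero,
      sub_zero]
    nlinarith [mul_nonneg hz (sq_nonneg ‖v‖)]
  have hCS := norm_inner_le_norm (𝕜 := ℂ) v ((z • (1 : G →L[ℂ] G) - N) v)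
  rw [hinner] at hCS
  nlinarith

theorem norm_adjoint_comp_inverse_sub_comp_sub_le {G H : Type*} [NormedAddCommGroup G]
    [InnerProductSpace ℂ G] [CompleteSpace G] [NormedAddCommGroup H] [InnerProductSpace ℂ H]
    [CompleteSpace H] (a : G →L[ℂ] H) {b x : H →L[ℂ] H} (hb : IsUnit b)
    (hx : ‖b⁻¹ʳ‖ * ‖x‖ ≤ 1 / 2) :
    ‖(adjoint a).comp ((b - x)⁻¹ʳ.comp a) - (adjoint a).comp (b⁻¹ʳ.comp a)‖ ≤
      2 * ‖a‖ ^ 2 * ‖b⁻¹ʳ‖ ^ 2 * ‖x‖ := by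
  rw [← comp_sub, ← sub_comp]
  calc _ ≤ ‖adjoint a‖ * (‖(b - x)⁻¹ʳ - b⁻¹ʳ‖ * ‖a‖) :=
        (opNorm_comp_le _ _).trans (by gcongr; exact opNorm_comp_le _ _)
    _ ≤ ‖a‖ * (2 * ‖b⁻¹ʳ‖ ^ 2 * ‖x‖ * ‖a‖) := by
        rw [adjoint.norm_map]; gcongr; exact norm_inverse_sub_sub_inverse_le hb hx
    _ = 2 * ‖a‖ ^ 2 * ‖b⁻¹ʳ‖ ^ 2 * ‖x‖ := by ring

theorem resolventDiff_bound_small_z_general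
    (a : E →L[ℂ] F) (b : F →L[ℂ] F) (hb : IsUnit b)
    (N : E →L[ℂ] E)
    (hN : N = (ContinuousLinearMap.adjoint a).comp ((Ring.inverse b).comp a))
    (hNsa : IsSelfAdjoint N)
    (μ : ℝ) (hμ : 0 < μ)
    (hNneg : ∀ v : E, (inner ℂ v (N v) : ℂ).re ≤ -μ * ‖v‖ ^ 2)
    (κ α : ℝ) (hκ : κ = ‖a‖ ^ 2 * ‖Ring.inverse b‖ ^ 2)
    (hα : α = min (‖Ring.inverse b‖⁻¹ / 2) (μ / (4 * κ)))
    (z : ℂ) (hz : 0 ≤ z.re) (hzα : ‖z‖ ≤ α) :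
    IsUnit (b - z • (1 : F →L[ℂ] F)) ∧
    IsUnit (z • (1 : E →L[ℂ] E) -
      (ContinuousLinearMap.adjoint a).comp
        ((Ring.inverse (b - z • (1 : F →L[ℂ] F))).comp a)) ∧
    IsUnit (z • (1 : E →L[ℂ] E) - N) ∧
    ‖resolventDiff a b z‖ ≤ 4 * κ * (μ ^ 2)⁻¹ * ‖z‖ ∧
    (z ≠ 0 → ‖resolventDiff a b z‖ ≤ 4 * κ * ‖z‖⁻¹) := by
  set m := max μ ‖z‖
  have hm : 0 < m := hμ.trans_le (le_max_left _ _)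
  have hκ0 : 0 ≤ κ := hκ ▸ by positivity
  have hzκ : 4 * κ * ‖z‖ ≤ μ := by
    rw [mul_comm]
    exact mul_le_of_le_div₀ hμ.le (by positivity) (hzα.trans (hα ▸ min_le_right _ _))
  have hz1 : ‖z • (1 : F →L[ℂ] F)‖ ≤ ‖z‖ :=
    (norm_smul_le z (1 : F →L[ℂ] F)).trans (mul_le_of_le_one_right (norm_nonneg z) norm_id_le)
  have hzb : ‖b⁻¹ʳ‖ * ‖z • (1 : F →L[ℂ] F)‖ ≤ 1 / 2 :=
    calc _ ≤ ‖b⁻¹ʳ‖ * (‖b⁻¹ʳ‖⁻¹ / 2) := by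
          gcongr; exact hz1.trans (hzα.trans (hα ▸ min_le_left _ _))
      _ ≤ 1 / 2 := by rw [← mul_div_assoc]; gcongr; exact mul_inv_le_one
  have hVT : ‖(z • (1 : E →L[ℂ] E) - N) - (z • (1 : E →L[ℂ] E) -
      (adjoint a).comp ((b - z • (1 : F →L[ℂ] F))⁻¹ʳ.comp a))‖ ≤ 2 * κ * ‖z‖ := by
    rw [sub_sub_sub_cancel_left, hN, hκ, ← mul_assoc 2]
    exact (norm_adjoint_comp_inverse_sub_comp_sub_le a hb hzb).trans (by gcongr)
  have hVbdd := max_mul_norm_le_norm_smul_one_sub_apply hNsa hμ.le hNneg hz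
  obtain ⟨hTu, hTV⟩ := isUnit_and_norm_inverse_sub_inverse_le_of_boundedBelow hm hVbdd
    (hVT.trans (by linarith [le_max_left μ ‖z‖]))
  have hS : ‖resolventDiff a b z‖ ≤ 4 * κ * ‖z‖ / m ^ 2 := by
    rw [resolventDiff, ← hN]
    exact hTV.trans (div_le_div_of_nonneg_right (by linarith) (by positivity))
  refine ⟨isUnit_sub_of_norm_inverse_mul_norm_lt_one hb (by linarith), hTu,
    isUnit_of_boundedBelow hm hVbdd, ?_, fun hz0 => ?_⟩
  · calc ‖resolventDiff a b z‖ ≤ 4 * κ * ‖z‖ / μ ^ 2 :=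
          hS.trans (by gcongr; exact le_max_left _ _)
      _ = 4 * κ * (μ ^ 2)⁻¹ * ‖z‖ := by ring
  · calc ‖resolventDiff a b z‖ ≤ 4 * κ * ‖z‖ / ‖z‖ ^ 2 :=
          hS.trans (by gcongr; exact le_max_right _ _)
      _ = 4 * κ * ‖z‖⁻¹ := by field_simp

/-- **Resolvent difference bounds in the right half plane, small `|z|`.** -/
theorem resolventDiff_bound_small_z
    [Nontrivial E] [Nontrivial F]
    (a : E →L[ℂ] F) (b : F →L[ℂ] F) (hb : IsUnit b)
    (N : E →L[ℂ] E)
    (hN : N = (ContinuousLinearMap.adjoint a).comp ((Ring.inverse b).comp a))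
    (hNsa : IsSelfAdjoint N)
    (μ : ℝ) (hμ : 0 < μ)
    (hNneg : ∀ v : E, (inner ℂ v (N v) : ℂ).re ≤ -μ * ‖v‖ ^ 2)
    (κ α : ℝ) (hκ : κ = ‖a‖ ^ 2 * ‖Ring.inverse b‖ ^ 2)
    (hα : α = min (‖Ring.inverse b‖⁻¹ / 2) (μ / (4 * κ)))
    (z : ℂ) (hz : 0 ≤ z.re) (hzα : ‖z‖ ≤ α) :
    IsUnit (b - z • (1 : F →L[ℂ] F)) ∧
    IsUnit (z • (1 : E →L[ℂ] E) -
      (ContinuousLinearMap.adjoint a).comp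
        ((Ring.inverse (b - z • (1 : F →L[ℂ] F))).comp a)) ∧
    IsUnit (z • (1 : E →L[ℂ] E) - N) ∧
    ‖resolventDiff a b z‖ ≤ 4 * κ * (μ ^ 2)⁻¹ * ‖z‖ ∧
    (z ≠ 0 → ‖resolventDiff a b z‖ ≤ 4 * κ * ‖z‖⁻¹) :=
  resolventDiff_bound_small_z_general a b hb N hN hNsa μ hμ hNneg κ α hκ hα z hz hzα
end
end

section
/- Let E and F be nonzero finite-dimensional complex inner product spaces, a : E → F and b : F → F continuous linear maps with b invertible, a† the adjoint of a, κ = ‖a‖²‖b⁻¹‖². Assume N := a† b⁻¹ a is self-adjoint and there is μ > 0 with re⟨v, N v⟩ ≤ −μ‖v‖² for all v ∈ E. Set α = min(‖b⁻¹‖⁻¹/2, μ/(4κ)). Assume further there is b_min > 0 such that for every z ∈ ℂ with re z ≥ 0 the map b − z·id is invertible with ‖(b − z·id)⁻¹‖ ≤ b_min⁻¹; that ‖a†b⁻¹a‖ ≤ α/2; and that ‖a†(b − z·id)⁻¹a‖ ≤ α/2 for every z with re z ≥ 0. Set β = max(1, 1/(α · b_min · ‖b⁻¹‖²)). Then for every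 z ∈ ℂ with re z ≥ 0 and z ≠ 0, the maps z·id − a†(b − z·id)⁻¹a and z·id − N are invertible and the resolvent difference S(z) = (z·id − a†(b − z·id)⁻¹a)⁻¹ − (z·id − N)⁻¹ satisfies ‖S(z)‖ ≤ 4βκ|z|⁻¹. -/
/-! The resolvent identity for `b` gives `a†(b - z)⁻¹a - a†b⁻¹a = z • a†(b - z)⁻¹b⁻¹a`, an
operator of norm `O(κ |z|)`. Since `N` is self-adjoint and negative, `‖(z - N) v‖ ≥ |z| ‖v‖` on the
closed right half plane. Moreover `μ ≤ ‖N‖ ≤ α / 2 ≤ μ / (8κ)` forces `κ ≤ 1/8`, so for `|z| ≤ α`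
the perturbation `a†(b - z)⁻¹a - N` has norm at most `|z| / 4`, while for `|z| > α` already
`‖a†(b - z)⁻¹a‖ ≤ α / 2 < |z| / 2`. Either way `z - a†(b - z)⁻¹a` is bounded below by `|z| / 2`,
hence invertible (finite dimension) with inverse of norm at most `2 / |z|`, and the second resolvent
identity `S(z) = (z - a†(b - z)⁻¹a)⁻¹ (a†(b - z)⁻¹a - N) (z - N)⁻¹` yields
`‖S(z)‖ ≤ (2 / |z|) (2βκ |z|) (1 / |z|)`. -/

noncomputable section

variable {E F : Type*} [NormedAddCommGroup E] [InnerProductSpace ℂ E]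
  [FiniteDimensional ℂ E] [NormedAddCommGroup F] [InnerProductSpace ℂ F]
  [FiniteDimensional ℂ F]

open scoped InnerProduct InnerProductSpace

section NormedRing

variable {R : Type*} [NormedRing R]

theorem Ring.norm_inverse_sub_inverse_le {x y : R} (h : IsUnit x ↔ IsUnit y) :
    ‖Ring.inverse x - Ring.inverse y‖ ≤ ‖Ring.inverse x‖ * ‖y - x‖ * ‖Ring.inverse y‖ := by
  rw [Ring.inverse_sub_inverse h]
  exact (norm_mul_le _ _).trans (mul_le_mul_of_nonneg_right (norm_mul_le _ _) (norm_nonneg _))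

theorem Ring.norm_inverse_le_two_mul {x y : R} (h : IsUnit x ↔ IsUnit y)
    (hxy : ‖Ring.inverse x‖ * ‖y - x‖ ≤ 1 / 2) : ‖Ring.inverse y‖ ≤ 2 * ‖Ring.inverse x‖ := by
  have hdiff := Ring.norm_inverse_sub_inverse_le h
  have htri := norm_le_norm_add_norm_sub' (Ring.inverse y) (Ring.inverse x)
  rw [norm_sub_rev] at htri
  nlinarith [mul_le_mul_of_nonneg_right hxy (norm_nonneg (Ring.inverse y))]

end NormedRing

section LowerBound

variable {𝕜 V W : Type*} [NontriviallyNormedField 𝕜] [NormedAddCommGroup V] [NormedSpace 𝕜 V]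
  [NormedAddCommGroup W] [NormedSpace 𝕜 W]

theorem ContinuousLinearMap.forall_le_norm_apply_of_norm_sub_le {T S : V →L[𝕜] W} {c d : ℝ}
    (hT : ∀ v, c * ‖v‖ ≤ ‖T v‖) (hd : ‖S - T‖ ≤ d) (v : V) : (c - d) * ‖v‖ ≤ ‖S v‖ := by
  have hST : ‖(S - T) v‖ ≤ d * ‖v‖ := (S - T).le_of_opNorm_le hd v
  have hTS : ‖T v‖ ≤ ‖S v‖ + ‖(S - T) v‖ := by
    simpa only [sub_apply, sub_sub_cancel] using norm_sub_le (S v) ((S - T) v)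
  nlinarith [hT v]

theorem ContinuousLinearMap.norm_smul_one_le (z : 𝕜) : ‖z • (1 : V →L[𝕜] V)‖ ≤ ‖z‖ :=
  (norm_smul_le z _).trans (mul_le_of_le_one_right (norm_nonneg z) norm_id_le)

theorem ContinuousLinearMap.isUnit_of_forall_le_norm_apply [CompleteSpace 𝕜]
    [FiniteDimensional 𝕜 V] {T : V →L[𝕜] V} {c : ℝ} (hc : 0 < c) (hT : ∀ v, c * ‖v‖ ≤ ‖T v‖) :
    IsUnit T := by
  have hinj : Function.Injective T := by
    refine (injective_iff_map_eq_zero T).2 fun v hv => norm_le_zero_iff.1 ?_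
    have := hT v
    rw [hv, norm_zero] at this
    exact nonpos_of_mul_nonpos_right this hc
  have := FiniteDimensional.complete 𝕜 V
  exact isUnit_iff_bijective.2
    ⟨hinj, LinearMap.injective_iff_surjective (f := (T : V →ₗ[𝕜] V)).1 hinj⟩

theorem ContinuousLinearMap.norm_inverse_le_of_forall_le_norm_apply {T : V →L[𝕜] V}
    (hT_unit : IsUnit T) {c : ℝ} (hc : 0 < c) (hT : ∀ v, c * ‖v‖ ≤ ‖T v‖) :
    ‖Ring.inverse T‖ ≤ c⁻¹ := by
  refine opNorm_le_bound _ (inv_nonneg.2 hc.le) fun w => (le_inv_mul_iff₀ hc).2 ?_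
  have hw : T (Ring.inverse T w) = w := by
    change (T * Ring.inverse T) w = w
    rw [Ring.mul_inverse_cancel T hT_unit, one_apply_eq_self]
  simpa [hw] using hT (Ring.inverse T w)

theorem ContinuousLinearMap.norm_inverse_sub_inverse_le_of_forall_le_norm_apply
    {S T : V →L[𝕜] V} (hS_unit : IsUnit S) (hT_unit : IsUnit T) {c d : ℝ} (hc : 0 < c)
    (hd : 0 < d)     (hS : ∀ v, c * ‖v‖ ≤ ‖S v‖) (hT : ∀ v, d * ‖v‖ ≤ ‖T v‖) :
    ‖Ring.inverse S - Ring.inverse T‖ ≤ c⁻¹ * ‖T - S‖ * d⁻¹ := by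
  refine (Ring.norm_inverse_sub_inverse_le (iff_of_true hS_unit hT_unit)).trans ?_
  gcongr
  · exact norm_inverse_le_of_forall_le_norm_apply hS_unit hc hS
  · exact norm_inverse_le_of_forall_le_norm_apply hT_unit hd hT

end LowerBound

section InnerProduct

variable {𝕜 H K : Type*} [RCLike 𝕜] [NormedAddCommGroup H] [InnerProductSpace 𝕜 H]
  [NormedAddCommGroup K] [InnerProductSpace 𝕜 K]

open RCLike ContinuousLinearMap

theorem ContinuousLinearMap.le_norm_of_re_inner_le_neg [Nontrivial H] {N : H →L[𝕜] H}
    {μ : ℝ} (hN : ∀ v, re ⟪v, N v⟫_𝕜 ≤ -μ * ‖v‖ ^ 2) : μ ≤ ‖N‖ := by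
  obtain ⟨v, hv⟩ := exists_ne (0 : H)
  have hv_pos : 0 < ‖v‖ ^ 2 := by positivity
  refine le_of_mul_le_mul_right ?_ hv_pos
  calc μ * ‖v‖ ^ 2 ≤ ‖⟪v, N v⟫_𝕜‖ := by
        nlinarith [hN v, neg_le_abs (re ⟪v, N v⟫_𝕜), abs_re_le_norm ⟪v, N v⟫_𝕜]
    _ ≤ ‖v‖ * ‖N v‖ := norm_inner_le_norm (𝕜 := 𝕜) v (N v)
    _ ≤ ‖N‖ * ‖v‖ ^ 2 := by nlinarith [N.le_opNorm v, norm_nonneg v]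

variable [CompleteSpace H] [CompleteSpace K]

theorem ContinuousLinearMap.mul_norm_le_norm_smul_one_sub_apply {N : H →L[𝕜] H}
    (hN : IsSelfAdjoint N) (hN_nonpos : ∀ v, re ⟪v, N v⟫_𝕜 ≤ 0) {z : 𝕜} (hz : 0 ≤ re z)
    (v : H) : ‖z‖ * ‖v‖ ≤ ‖(z • (1 : H →L[𝕜] H) - N) v‖ := by
  have hcross : re ⟪z • v, N v⟫_𝕜 ≤ 0 := by
    have him : im ⟪v, N v⟫_𝕜 = 0 := hN.isSymmetric.im_inner_self_apply v
    rw [inner_smul_left, mul_re, conj_re, conj_im, him]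
    nlinarith [hN_nonpos v]
  have hsq : (‖z‖ * ‖v‖) ^ 2 ≤ ‖(z • (1 : H →L[𝕜] H) - N) v‖ ^ 2 := by
    rw [sub_apply, smul_apply, one_apply_eq_self, norm_sub_sq (𝕜 := 𝕜), ← norm_smul]
    nlinarith [sq_nonneg ‖N v‖]
  exact le_of_sq_le_sq hsq (norm_nonneg _)

theorem ContinuousLinearMap.norm_adjoint_comp_comp_le (a : H →L[𝕜] K) (X : K →L[𝕜] K) :
    ‖a†.comp (X.comp a)‖ ≤ ‖X‖ * ‖a‖ ^ 2 := by
  calc ‖a†.comp (X.comp a)‖ ≤ ‖a†‖ * (‖X‖ * ‖a‖) :=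
        (opNorm_comp_le _ _).trans (mul_le_mul_of_nonneg_left (opNorm_comp_le _ _) (norm_nonneg _))
    _ = ‖X‖ * ‖a‖ ^ 2 := by rw [adjoint.norm_map]; ring

theorem norm_adjoint_comp_inverse_sub_comp_sub_le_s6 (a : H →L[𝕜] K) {b : K →L[𝕜] K} {z : 𝕜}
    (hb : IsUnit b) (hbz : IsUnit (b - z • (1 : K →L[𝕜] K))) :
    ‖a†.comp ((Ring.inverse (b - z • (1 : K →L[𝕜] K))).comp a) -
        a†.comp ((Ring.inverse b).comp a)‖ ≤
      ‖z‖ * ‖Ring.inverse (b - z • (1 : K →L[𝕜] K))‖ * ‖Ring.inverse b‖ * ‖a‖ ^ 2 := by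
  rw [← comp_sub, ← sub_comp]
  refine (norm_adjoint_comp_comp_le a _).trans (mul_le_mul_of_nonneg_right ?_ (by positivity))
  refine (Ring.norm_inverse_sub_inverse_le (iff_of_true hbz hb)).trans ?_
  rw [sub_sub_cancel, mul_comm ‖z‖]
  gcongr
  exact norm_smul_one_le z

theorem half_mul_norm_le_norm_smul_one_sub_adjoint_comp_inverse_sub_comp_apply
    (a : H →L[𝕜] K) {b : K →L[𝕜] K} {z : 𝕜}
    (hb : IsUnit b) (hbz : IsUnit (b - z • (1 : K →L[𝕜] K))) {α : ℝ}
    (hαb : α * ‖Ring.inverse b‖ ≤ 1 / 2) (hκ : 8 * (‖a‖ ^ 2 * ‖Ring.inverse b‖ ^ 2) ≤ 1)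
    (hNz : ‖a†.comp ((Ring.inverse (b - z • (1 : K →L[𝕜] K))).comp a)‖ ≤ α / 2)
    (hN : ∀ v, ‖z‖ * ‖v‖ ≤ ‖(z • (1 : H →L[𝕜] H) - a†.comp ((Ring.inverse b).comp a)) v‖)
    (v : H) :
    ‖z‖ / 2 * ‖v‖ ≤
      ‖(z • (1 : H →L[𝕜] H) - a†.comp ((Ring.inverse (b - z • (1 : K →L[𝕜] K))).comp a)) v‖ := by
  set Nz := a†.comp ((Ring.inverse (b - z • (1 : K →L[𝕜] K))).comp a)
  rcases le_or_gt ‖z‖ α with hsmall | hlarge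
  · have hRz : ‖Ring.inverse (b - z • (1 : K →L[𝕜] K))‖ ≤ 2 * ‖Ring.inverse b‖ := by
      refine Ring.norm_inverse_le_two_mul (iff_of_true hb hbz) ?_
      rw [sub_sub_cancel_left, norm_neg, mul_comm]
      calc ‖z • (1 : K →L[𝕜] K)‖ * ‖Ring.inverse b‖ ≤ α * ‖Ring.inverse b‖ := by
            gcongr; exact (norm_smul_one_le z).trans hsmall
        _ ≤ 1 / 2 := hαb
    have hdiff : ‖(z • 1 - Nz) - (z • 1 - a†.comp ((Ring.inverse b).comp a))‖ ≤ ‖z‖ / 4 := by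
      rw [sub_sub_sub_cancel_left, norm_sub_rev]
      refine (norm_adjoint_comp_inverse_sub_comp_sub_le_s6 a hb hbz).trans ?_
      have := mul_le_mul_of_nonneg_right hRz (by positivity : 0 ≤ ‖Ring.inverse b‖ * ‖a‖ ^ 2)
      nlinarith [norm_nonneg z]
    nlinarith [forall_le_norm_apply_of_norm_sub_le hN hdiff v,
      mul_nonneg (norm_nonneg z) (norm_nonneg v)]
  · have hdiff : ‖(z • 1 - Nz) - z • 1‖ ≤ α / 2 := by rwa [sub_sub_cancel_left, norm_neg]
    have hsmul : ∀ v : H, ‖z‖ * ‖v‖ ≤ ‖(z • (1 : H →L[𝕜] H)) v‖ := fun v => by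
      rw [smul_apply, one_apply_eq_self, norm_smul]
    nlinarith [forall_le_norm_apply_of_norm_sub_le hsmul hdiff v, norm_nonneg v]

end InnerProduct

theorem gap_constants_bounds {μ n A B κ α bmin β : ℝ} (hμ : 0 < μ) (hμn : μ ≤ n)
    (hnB : n ≤ B * A ^ 2) (hnα : n ≤ α / 2) (hκ : κ = A ^ 2 * B ^ 2)
    (hα : α = min (B⁻¹ / 2) (μ / (4 * κ))) (hbmin : 0 < bmin)
    (hβ : β = max 1 (1 / (α * bmin * B ^ 2))) :
    α * B ≤ 1 / 2 ∧ 8 * κ ≤ 1 ∧ 1 ≤ β ∧ bmin⁻¹ ≤ 2 * β * B := by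
  have hB : 0 < B := by nlinarith [sq_nonneg A]
  have hκ_pos : 0 < κ := by rw [hκ]; nlinarith
  have hα_pos : 0 < α := by rw [hα]; exact lt_min (by positivity) (by positivity)
  have hαB : α * B ≤ 1 / 2 := by
    have h : α ≤ B⁻¹ / 2 := hα ▸ min_le_left _ _
    calc α * B ≤ B⁻¹ / 2 * B := by gcongr
      _ = 1 / 2 := by field_simp
  have hκ8 : 8 * κ ≤ 1 := by
    have h : α ≤ μ / (4 * κ) := hα ▸ min_le_right _ _
    rw [le_div_iff₀ (by positivity)] at h
    nlinarith
  have hβ1 : 1 ≤ β := hβ ▸ le_max_left _ _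
  refine ⟨hαB, hκ8, hβ1, (inv_le_iff_one_le_mul₀' hbmin).2 ?_⟩
  have h : 1 / (α * bmin * B ^ 2) ≤ β := hβ ▸ le_max_right _ _
  rw [div_le_iff₀ (by positivity)] at h
  nlinarith [mul_le_mul_of_nonneg_right hαB (by positivity : 0 ≤ β * bmin * B)]

open ContinuousLinearMap in
theorem resolventDiff_bound_right_half_plane_general
    [Nontrivial E]
    (a : E →L[ℂ] F) (b : F →L[ℂ] F) (hb : IsUnit b)
    (N : E →L[ℂ] E)
    (hN : N = (ContinuousLinearMap.adjoint a).comp ((Ring.inverse b).comp a))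
    (hNsa : IsSelfAdjoint N)
    (μ : ℝ) (hμ : 0 < μ)
    (hNneg : ∀ v : E, (inner ℂ v (N v) : ℂ).re ≤ -μ * ‖v‖ ^ 2)
    (κ α : ℝ) (hκ : κ = ‖a‖ ^ 2 * ‖Ring.inverse b‖ ^ 2)
    (hα : α = min (‖Ring.inverse b‖⁻¹ / 2) (μ / (4 * κ)))
    (bmin : ℝ) (hbmin : 0 < bmin)
    (hres : ∀ z : ℂ, 0 ≤ z.re → IsUnit (b - z • (1 : F →L[ℂ] F)) ∧
      ‖Ring.inverse (b - z • (1 : F →L[ℂ] F))‖ ≤ bmin⁻¹)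
    (hNα : ‖(ContinuousLinearMap.adjoint a).comp ((Ring.inverse b).comp a)‖ ≤ α / 2)
    (hNzα : ∀ z : ℂ, 0 ≤ z.re →
      ‖(ContinuousLinearMap.adjoint a).comp
        ((Ring.inverse (b - z • (1 : F →L[ℂ] F))).comp a)‖ ≤ α / 2)
    (β : ℝ) (hβ : β = max 1 (1 / (α * bmin * ‖Ring.inverse b‖ ^ 2)))
    (z : ℂ) (hz : 0 ≤ z.re) (hz0 : z ≠ 0) :
    IsUnit (z • (1 : E →L[ℂ] E) -
      (ContinuousLinearMap.adjoint a).comp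
        ((Ring.inverse (b - z • (1 : F →L[ℂ] F))).comp a)) ∧
    IsUnit (z • (1 : E →L[ℂ] E) - N) ∧
    ‖resolventDiff a b z‖ ≤ 4 * β * κ * ‖z‖⁻¹ := by
  obtain ⟨hbz, hRz⟩ := hres z hz
  have hz_pos : 0 < ‖z‖ := norm_pos_iff.2 hz0
  obtain ⟨hαb, hκ8, hβ1, hbmin_le⟩ := gap_constants_bounds hμ
    (le_norm_of_re_inner_le_neg (𝕜 := ℂ) hNneg) (hN ▸ norm_adjoint_comp_comp_le a _) (hN ▸ hNα)
    hκ hα hbmin hβ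
  have hlowN := mul_norm_le_norm_smul_one_sub_apply (𝕜 := ℂ) hNsa
    (fun v => (hNneg v).trans (mul_nonpos_of_nonpos_of_nonneg (neg_nonpos.2 hμ.le) (sq_nonneg _)))
    hz
  have hlowNz := half_mul_norm_le_norm_smul_one_sub_adjoint_comp_inverse_sub_comp_apply a hb hbz
    hαb (hκ ▸ hκ8) (hNzα z hz) (hN ▸ hlowN)
  set Nz := adjoint a ∘L (Ring.inverse (b - z • 1) ∘L a)
  have hdiff : ‖(z • 1 - N) - (z • 1 - Nz)‖ ≤ 2 * β * κ * ‖z‖ := by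
    rw [sub_sub_sub_cancel_left, hN]
    calc _ ≤ ‖z‖ * ‖Ring.inverse (b - z • 1)‖ * ‖Ring.inverse b‖ * ‖a‖ ^ 2 :=
          norm_adjoint_comp_inverse_sub_comp_sub_le_s6 a hb hbz
      _ ≤ ‖z‖ * (2 * β * ‖Ring.inverse b‖) * ‖Ring.inverse b‖ * ‖a‖ ^ 2 := by
          gcongr; exact hRz.trans hbmin_le
      _ = 2 * β * κ * ‖z‖ := by rw [hκ]; ring
  have hu := isUnit_of_forall_le_norm_apply (half_pos hz_pos) hlowNz
  have hu0 := isUnit_of_forall_le_norm_apply hz_pos hlowN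
  refine ⟨hu, hu0, ?_⟩
  calc ‖resolventDiff a b z‖ ≤ (‖z‖ / 2)⁻¹ * ‖(z • 1 - N) - (z • 1 - Nz)‖ * ‖z‖⁻¹ := by
        rw [resolventDiff, ← hN]
        exact norm_inverse_sub_inverse_le_of_forall_le_norm_apply hu hu0 (half_pos hz_pos) hz_pos
          hlowNz hlowN
    _ ≤ (‖z‖ / 2)⁻¹ * (2 * β * κ * ‖z‖) * ‖z‖⁻¹ := by gcongr
    _ = 4 * β * κ * ‖z‖⁻¹ := by field_simp; ring

/-- **Resolvent difference bound in the right half plane, all `z`.** -/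
theorem resolventDiff_bound_right_half_plane
    [Nontrivial E] [Nontrivial F]
    (a : E →L[ℂ] F) (b : F →L[ℂ] F) (hb : IsUnit b)
    (N : E →L[ℂ] E)
    (hN : N = (ContinuousLinearMap.adjoint a).comp ((Ring.inverse b).comp a))
    (hNsa : IsSelfAdjoint N)
    (μ : ℝ) (hμ : 0 < μ)
    (hNneg : ∀ v : E, (inner ℂ v (N v) : ℂ).re ≤ -μ * ‖v‖ ^ 2)
    (κ α : ℝ) (hκ : κ = ‖a‖ ^ 2 * ‖Ring.inverse b‖ ^ 2)
    (hα : α = min (‖Ring.inverse b‖⁻¹ / 2) (μ / (4 * κ)))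
    (bmin : ℝ) (hbmin : 0 < bmin)
    (hres : ∀ z : ℂ, 0 ≤ z.re → IsUnit (b - z • (1 : F →L[ℂ] F)) ∧
      ‖Ring.inverse (b - z • (1 : F →L[ℂ] F))‖ ≤ bmin⁻¹)
    (hNα : ‖(ContinuousLinearMap.adjoint a).comp ((Ring.inverse b).comp a)‖ ≤ α / 2)
    (hNzα : ∀ z : ℂ, 0 ≤ z.re →
      ‖(ContinuousLinearMap.adjoint a).comp
        ((Ring.inverse (b - z • (1 : F →L[ℂ] F))).comp a)‖ ≤ α / 2)
    (β : ℝ) (hβ : β = max 1 (1 / (α * bmin * ‖Ring.inverse b‖ ^ 2)))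
    (z : ℂ) (hz : 0 ≤ z.re) (hz0 : z ≠ 0) :
    IsUnit (z • (1 : E →L[ℂ] E) -
      (ContinuousLinearMap.adjoint a).comp
        ((Ring.inverse (b - z • (1 : F →L[ℂ] F))).comp a)) ∧
    IsUnit (z • (1 : E →L[ℂ] E) - N) ∧
    ‖resolventDiff a b z‖ ≤ 4 * β * κ * ‖z‖⁻¹ :=
  resolventDiff_bound_right_half_plane_general a b hb N hN hNsa μ hμ hNneg κ α hκ hα bmin hbmin hres
    hNα hNzα β hβ z hz hz0
end
end

section
/- Let E and F be nonzero finite-dimensional complex inner product spaces, a : E → F and b : F → F continuous linear maps with b invertible, a† the adjoint of a, κ = ‖a‖²‖b⁻¹‖². Assume N := a† b⁻¹ a is self-adjoint and there is μ > 0 with re⟨v, N v⟩ ≤ −μ‖v‖² for all v ∈ E. Set α = min(‖b⁻¹‖⁻¹/2, μ/(4κ)) and assume μ ≤ α. Assume further there is b_min > 0 such that for every z ∈ ℂ with re z ≥ 0 the map b − z·id is invertible with ‖(b − z·id)⁻¹‖ ≤ b_min⁻¹, that ‖a†b⁻¹a‖ ≤ α/2, and that ‖a†(b − z·id)⁻¹a‖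 ≤ α/2 for every z with re z ≥ 0; set β = max(1, 1/(α · b_min · ‖b⁻¹‖²)). Then the function y ↦ (i y)⁻¹ S(i y), where S(z) = (z·id − a†(b − z·id)⁻¹a)⁻¹ − (z·id − N)⁻¹, defined for y ∈ ℝ \ {0}, is Bochner integrable on ℝ, and ‖(1/(2π)) ∫_ℝ (i y)⁻¹ S(i y) dy‖ ≤ (4/π) κ μ⁻¹ (1 + β). -/
/-!
On the imaginary axis `z = i y` write `A(z) = a†(b − z)⁻¹a`, `X = z − A(z)` and `Y = z − N`, so
that `S(z) = X⁻¹ (A(z) − N) Y⁻¹` and `A(z) − N = a†(b − z)⁻¹ z b⁻¹ a = O(|y|)`.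
Since `N` is self-adjoint and dissipative, `|⟪v, Y v⟫| ≥ max(μ, |y|) ‖v‖²`, hence
`‖Y⁻¹‖ ≤ max(μ, |y|)⁻¹`. The hypotheses force `4κα ≤ μ ≤ ‖N‖ ≤ α/2`, i.e. `κ ≤ 1/8`; so for
`|y| ≤ α` the perturbation `A(z) − N` has norm at most `2κ|y| ≤ max(μ, |y|)/4`, while for
`|y| ≥ α` the bound `‖A(z)‖ ≤ α/2` gives `‖X⁻¹‖ ≤ 2/|y|`. Altogether
`‖S(iy)/(iy)‖ ≤ (8κ/3) max(μ, |y|)⁻² + 2c max(α, |y|)⁻²` with `c = ‖a‖²‖b⁻¹‖/b_min`, and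
`∫ max(m, |y|)⁻² dy = 4/m`; the choice of `β` absorbs the second term.
-/

open MeasureTheory

noncomputable section

variable {E F : Type*} [NormedAddCommGroup E] [InnerProductSpace ℂ E]
  [FiniteDimensional ℂ E] [NormedAddCommGroup F] [InnerProductSpace ℂ F]
  [FiniteDimensional ℂ F]

open Set

theorem norm_ringInverse_sub_ringInverse_le {R : Type*} [NormedRing R] {x y : R}
    (hx : IsUnit x) (hy : IsUnit y) :
    ‖Ring.inverse x - Ring.inverse y‖ ≤ ‖Ring.inverse x‖ * ‖y - x‖ * ‖Ring.inverse y‖ := by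
  rw [Ring.inverse_sub_inverse (iff_of_true hx hy)]
  exact (norm_mul_le _ _).trans (mul_le_mul_of_nonneg_right (norm_mul_le _ _) (norm_nonneg _))

theorem Continuous.ringInverse {X R : Type*} [TopologicalSpace X] [NormedRing R]
    [HasSummableGeomSeries R] {f : X → R} (hf : Continuous f) (hu : ∀ x, IsUnit (f x)) :
    Continuous fun x => Ring.inverse (f x) := by
  refine continuous_iff_continuousAt.mpr fun x => ?_
  have h := NormedRing.inverse_continuousAt (hu x).unit
  rw [IsUnit.unit_spec] at h
  exact h.comp hf.continuousAt

namespace ContinuousLinearMap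

variable {𝕜 V : Type*} [NontriviallyNormedField 𝕜] [NormedAddCommGroup V] [NormedSpace 𝕜 V]

theorem isUnit_of_mul_norm_le_norm_apply [CompleteSpace 𝕜] [FiniteDimensional 𝕜 V]
    {T : V →L[𝕜] V} {m : ℝ} (hm : 0 < m) (hT : ∀ v, m * ‖v‖ ≤ ‖T v‖) : IsUnit T := by
  have : CompleteSpace V := FiniteDimensional.complete 𝕜 V
  rw [isUnit_iff_isUnit_toLinearMap, LinearMap.isUnit_iff_ker_eq_bot, LinearMap.ker_eq_bot']
  intro v hv
  have hTv := hT v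
  rw [coe_coe] at hv
  rw [hv, norm_zero] at hTv
  exact norm_le_zero_iff.mp (nonpos_of_mul_nonpos_right hTv hm)

theorem norm_ringInverse_le_of_mul_norm_le_norm_apply {T : V →L[𝕜] V} {m : ℝ} (hm : 0 < m)
    (hT : ∀ v, m * ‖v‖ ≤ ‖T v‖) : ‖Ring.inverse T‖ ≤ m⁻¹ := by
  by_cases hu : IsUnit T
  · refine opNorm_le_bound _ (inv_nonneg.mpr hm.le) fun w => ?_
    have hw : T (Ring.inverse T w) = w := by
      rw [← mul_apply_eq_comp, Ring.mul_inverse_cancel T hu, one_apply_eq_self]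
    rw [inv_mul_eq_div, le_div_iff₀ hm, mul_comm, ← hw]
    simpa only [hw] using hT (Ring.inverse T w)
  · rw [Ring.inverse_non_unit T hu, norm_zero]
    positivity

theorem mul_norm_le_norm_sub_apply {T D : V →L[𝕜] V} {m m' : ℝ} (hT : ∀ v, m * ‖v‖ ≤ ‖T v‖)
    (hD : ‖D‖ ≤ m - m') (v : V) : m' * ‖v‖ ≤ ‖(T - D) v‖ := by
  have hDv : ‖D v‖ ≤ (m - m') * ‖v‖ := (D.le_opNorm v).trans (by gcongr)
  rw [sub_apply]
  nlinarith [hT v, norm_sub_norm_le (T v) (D v)]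

theorem inv_norm_ringInverse_mul_le_norm_apply {T : V →L[𝕜] V} (hT : IsUnit T) (v : V) :
    ‖Ring.inverse T‖⁻¹ * ‖v‖ ≤ ‖T v‖ := by
  have hv : Ring.inverse T (T v) = v := by
    rw [← mul_apply_eq_comp, Ring.inverse_mul_cancel T hT, one_apply_eq_self]
  rcases (norm_nonneg (Ring.inverse T)).eq_or_lt with h | h
  · rw [← h, inv_zero, zero_mul]; exact norm_nonneg _
  · rw [inv_mul_le_iff₀ h]
    calc ‖v‖ = ‖Ring.inverse T (T v)‖ := by rw [hv]
      _ ≤ ‖Ring.inverse T‖ * ‖T v‖ := le_opNorm _ _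

theorem norm_smul_one_le_s9 (z : 𝕜) : ‖z • (1 : V →L[𝕜] V)‖ ≤ ‖z‖ :=
  (norm_smul_le _ _).trans (mul_le_of_le_one_right (norm_nonneg z) norm_id_le)

theorem isUnit_sub_smul_one_and_norm_ringInverse_le [CompleteSpace 𝕜] [FiniteDimensional 𝕜 V]
    {b : V →L[𝕜] V} (hb : IsUnit b) (hr : 0 < ‖Ring.inverse b‖) {z : 𝕜}
    (hz : ‖z‖ ≤ ‖Ring.inverse b‖⁻¹ / 2) :
    IsUnit (b - z • 1) ∧ ‖Ring.inverse (b - z • 1)‖ ≤ 2 * ‖Ring.inverse b‖ := by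
  have hlow := mul_norm_le_norm_sub_apply (m' := ‖Ring.inverse b‖⁻¹ / 2)
    (inv_norm_ringInverse_mul_le_norm_apply hb)
    ((norm_smul_one_le_s9 z).trans (by linarith))
  have hpos : 0 < ‖Ring.inverse b‖⁻¹ / 2 := by positivity
  refine ⟨isUnit_of_mul_norm_le_norm_apply hpos hlow, ?_⟩
  have hinv := norm_ringInverse_le_of_mul_norm_le_norm_apply hpos hlow
  rwa [inv_div, div_inv_eq_mul] at hinv

theorem isUnit_smul_one_sub_and_norm_ringInverse_le [CompleteSpace 𝕜] [FiniteDimensional 𝕜 V]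
    {A : V →L[𝕜] V} {z : 𝕜} (hz : z ≠ 0) (hA : ‖A‖ ≤ ‖z‖ / 2) :
    IsUnit (z • 1 - A) ∧ ‖Ring.inverse (z • 1 - A)‖ ≤ (‖z‖ / 2)⁻¹ := by
  have hlow := mul_norm_le_norm_sub_apply (T := z • 1) (m' := ‖z‖ / 2)
    (fun v => by rw [smul_apply, one_apply_eq_self, norm_smul]) (hA.trans_eq (by ring))
  have hpos : 0 < ‖z‖ / 2 := by positivity
  exact ⟨isUnit_of_mul_norm_le_norm_apply hpos hlow,
    norm_ringInverse_le_of_mul_norm_le_norm_apply hpos hlow⟩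

end ContinuousLinearMap

theorem ContinuousLinearMap.mul_norm_le_norm_apply_of_mul_norm_sq_le_norm_inner
    {𝕜 V : Type*} [RCLike 𝕜] [NormedAddCommGroup V] [InnerProductSpace 𝕜 V] {T : V →L[𝕜] V} {m : ℝ}
    (hT : ∀ v, m * ‖v‖ ^ 2 ≤ ‖(inner 𝕜 v (T v) : 𝕜)‖) (v : V) : m * ‖v‖ ≤ ‖T v‖ := by
  rcases (norm_nonneg v).eq_or_lt with hv | hv
  · rw [← hv, mul_zero]; exact norm_nonneg _
  · nlinarith [(hT v).trans (norm_inner_le_norm v (T v))]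

namespace IsSelfAdjoint

variable {V : Type*} [NormedAddCommGroup V] [InnerProductSpace ℂ V] [CompleteSpace V]
  {N : V →L[ℂ] V} {μ : ℝ}

theorem max_mul_norm_sq_le_norm_inner_smul_one_sub_apply (hN : IsSelfAdjoint N)
    (hNneg : ∀ v : V, (inner ℂ v (N v) : ℂ).re ≤ -μ * ‖v‖ ^ 2) {z : ℂ} (hz : 0 ≤ z.re) (v : V) :
    max μ |z.im| * ‖v‖ ^ 2 ≤ ‖(inner ℂ v ((z • 1 - N) v) : ℂ)‖ := by
  have hinner : (inner ℂ v ((z • 1 - N) v) : ℂ) = z * ‖v‖ ^ 2 - inner ℂ v (N v) := by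
    rw [sub_apply, smul_apply, one_apply_eq_self,
      inner_sub_right, inner_smul_right, inner_self_eq_norm_sq_to_K]
    norm_cast
  have him : (inner ℂ v (N v) : ℂ).im = 0 := hN.isSymmetric.im_inner_self_apply v
  rw [hinner]
  rcases max_cases μ |z.im| with ⟨hmax, -⟩ | ⟨hmax, -⟩ <;> rw [hmax]
  · refine le_trans ?_ (Complex.abs_re_le_norm _)
    rw [Complex.sub_re, ← Complex.ofReal_pow, Complex.re_mul_ofReal]
    refine le_trans ?_ (le_abs_self _)
    nlinarith [hNneg v, mul_nonneg hz (sq_nonneg ‖v‖)]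
  · refine le_trans ?_ (Complex.abs_im_le_norm _)
    rw [Complex.sub_im, ← Complex.ofReal_pow, Complex.im_mul_ofReal, him, sub_zero, abs_mul,
      abs_of_nonneg (sq_nonneg ‖v‖)]

theorem isUnit_smul_one_sub [FiniteDimensional ℂ V] (hN : IsSelfAdjoint N) (hμ : 0 < μ)
    (hNneg : ∀ v : V, (inner ℂ v (N v) : ℂ).re ≤ -μ * ‖v‖ ^ 2) {z : ℂ} (hz : 0 ≤ z.re) :
    IsUnit (z • 1 - N) ∧ ‖Ring.inverse (z • 1 - N)‖ ≤ (max μ |z.im|)⁻¹ := by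
  have hlow := ContinuousLinearMap.mul_norm_le_norm_apply_of_mul_norm_sq_le_norm_inner
    (hN.max_mul_norm_sq_le_norm_inner_smul_one_sub_apply hNneg hz)
  have hpos : 0 < max μ |z.im| := lt_max_of_lt_left hμ
  exact ⟨ContinuousLinearMap.isUnit_of_mul_norm_le_norm_apply hpos hlow,
    ContinuousLinearMap.norm_ringInverse_le_of_mul_norm_le_norm_apply hpos hlow⟩

end IsSelfAdjoint

theorem ContinuousLinearMap.le_opNorm_of_re_inner_le {V : Type*} [NormedAddCommGroup V]
    [InnerProductSpace ℂ V] [Nontrivial V] {N : V →L[ℂ] V} {μ : ℝ}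
    (hNneg : ∀ v : V, (inner ℂ v (N v) : ℂ).re ≤ -μ * ‖v‖ ^ 2) : μ ≤ ‖N‖ := by
  obtain ⟨v, hv⟩ := exists_ne (0 : V)
  have hlow := N.mul_norm_le_norm_apply_of_mul_norm_sq_le_norm_inner (m := μ)
    (fun w => by nlinarith [hNneg w, neg_abs_le (inner ℂ w (N w) : ℂ).re,
      Complex.abs_re_le_norm (inner ℂ w (N w) : ℂ)]) v
  exact le_of_mul_le_mul_right (hlow.trans (N.le_opNorm v)) (norm_pos_iff.mpr hv)

theorem ContinuousLinearMap.norm_adjoint_comp_comp_le_s9 {V W : Type*} [NormedAddCommGroup V]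
    [InnerProductSpace ℂ V] [CompleteSpace V] [NormedAddCommGroup W] [InnerProductSpace ℂ W]
    [CompleteSpace W] (a : V →L[ℂ] W) (T : W →L[ℂ] W) :
    ‖(adjoint a).comp (T.comp a)‖ ≤ ‖a‖ ^ 2 * ‖T‖ :=
  calc ‖(adjoint a).comp (T.comp a)‖ ≤ ‖adjoint a‖ * (‖T‖ * ‖a‖) :=
        (opNorm_comp_le _ _).trans (by gcongr; exact opNorm_comp_le _ _)
    _ = ‖a‖ ^ 2 * ‖T‖ := by rw [LinearIsometryEquiv.norm_map]; ring


section InvMaxSq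

variable {m : ℝ}

theorem inv_max_abs_sq_le (hm : 0 < m) (y : ℝ) :
    (max m |y|)⁻¹ ^ 2 ≤ 2 * m⁻¹ ^ 2 * (1 + (y / m) ^ 2)⁻¹ := by
  have hM : 0 < max m |y| := lt_max_of_lt_left hm
  have hsq : m ^ 2 + y ^ 2 ≤ 2 * max m |y| ^ 2 := by
    nlinarith [le_max_left m |y|, le_max_right m |y|, sq_abs y, abs_nonneg y]
  rw [show 2 * m⁻¹ ^ 2 * (1 + (y / m) ^ 2)⁻¹ = 2 / (m ^ 2 + y ^ 2) by field_simp, inv_pow,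
    inv_eq_one_div, div_le_div_iff₀ (by positivity) (by positivity)]
  linarith

theorem integrable_inv_max_abs_sq (hm : 0 < m) :
    Integrable fun y : ℝ => (max m |y|)⁻¹ ^ 2 := by
  refine ((integrable_inv_one_add_sq.comp_div hm.ne').const_mul (2 * m⁻¹ ^ 2)).mono'
    (by fun_prop) (ae_of_all _ fun y => ?_)
  rw [Real.norm_of_nonneg (by positivity)]
  exact inv_max_abs_sq_le hm y

theorem integral_inv_max_abs_sq (hm : 0 < m) : ∫ y : ℝ, (max m |y|)⁻¹ ^ 2 = 4 / m := by
  have hIoc : EqOn (fun t : ℝ => (max m t)⁻¹ ^ 2) (fun _ => m⁻¹ ^ 2) (Ioc 0 m) :=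
    fun t ht => by dsimp only; rw [max_eq_left ht.2]
  have hIoi : EqOn (fun t : ℝ => (max m t)⁻¹ ^ 2) (fun t => t ^ (-2 : ℝ)) (Ioi m) :=
    fun t ht => by
      dsimp only
      rw [max_eq_right (le_of_lt ht), Real.rpow_neg (hm.trans ht).le, inv_pow]
      norm_cast
  rw [integral_comp_abs (f := fun t => (max m t)⁻¹ ^ 2), ← Ioc_union_Ioi_eq_Ioi hm.le,
    setIntegral_union (Ioc_disjoint_Ioi le_rfl) measurableSet_Ioi
      ((integrableOn_const (by simp)).congr_fun hIoc.symm measurableSet_Ioc)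
      ((integrableOn_Ioi_rpow_of_lt (by norm_num) hm).congr_fun hIoi.symm measurableSet_Ioi),
    setIntegral_congr_fun measurableSet_Ioc hIoc, setIntegral_congr_fun measurableSet_Ioi hIoi,
    setIntegral_const, integral_Ioi_rpow_of_lt (by norm_num) hm, Real.volume_real_Ioc_of_le hm.le]
  norm_num [Real.rpow_neg_one]
  field_simp
  ring

theorem integrable_and_norm_integral_le_of_norm_le_inv_max_sq {G : Type*} [NormedAddCommGroup G]
    [NormedSpace ℝ G] {f : ℝ → G} (hf : AEStronglyMeasurable f) {n A B : ℝ} (hm : 0 < m)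
    (hn : 0 < n) (hfA : ∀ y, ‖f y‖ ≤ A * (max m |y|)⁻¹ ^ 2 + B * (max n |y|)⁻¹ ^ 2) :
    Integrable f ∧ ‖∫ y, f y‖ ≤ 4 * A / m + 4 * B / n := by
  have hm' := (integrable_inv_max_abs_sq hm).const_mul A
  have hn' := (integrable_inv_max_abs_sq hn).const_mul B
  refine ⟨(hm'.add hn').mono' hf (ae_of_all _ hfA),
    (norm_integral_le_of_norm_le (hm'.add hn') (ae_of_all _ hfA)).trans_eq ?_⟩
  simp only [Pi.add_apply]
  rw [integral_add hm' hn', integral_const_mul, integral_const_mul, integral_inv_max_abs_sq hm,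
    integral_inv_max_abs_sq hn]
  ring

end InvMaxSq

theorem relaxation_constant_le {A r bmin μ α β : ℝ} (hr : 0 < r) (hbmin : 0 < bmin)
    (hμ : 0 < μ) (hμα : μ ≤ α) (hαr : α ≤ r⁻¹ / 2) (hβ1 : 1 ≤ β)
    (hβ : 1 / (α * bmin * r ^ 2) ≤ β) :
    4 * (8 / 3 * (A ^ 2 * r ^ 2)) / μ + 4 * (2 * (A ^ 2 * bmin⁻¹ * r)) / α ≤
      8 * (A ^ 2 * r ^ 2) / μ * (1 + β) := by
  have hα : 0 < α := hμ.trans_le hμα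
  have hbminβ : bmin⁻¹ ≤ β * α * r ^ 2 := by
    rw [div_le_iff₀ (by positivity)] at hβ
    rw [inv_le_iff_one_le_mul₀' hbmin]
    linarith
  have hμr : 2 * r * μ ≤ 1 := by
    have hαr' : α * r ≤ r⁻¹ / 2 * r := by gcongr
    rw [div_mul_eq_mul_div, inv_mul_cancel₀ hr.ne'] at hαr'
    nlinarith
  have hkinetic : 4 * (8 / 3 * (A ^ 2 * r ^ 2)) / μ ≤ 4 * (A ^ 2 * r ^ 2) * (2 + β) / μ := by
    refine div_le_div_of_nonneg_right ?_ hμ.le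
    nlinarith [sq_nonneg (A * r)]
  have hmemory : 4 * (2 * (A ^ 2 * bmin⁻¹ * r)) / α ≤ 4 * (A ^ 2 * r ^ 2) * β / μ := by
    rw [div_le_div_iff₀ hα hμ]
    calc 4 * (2 * (A ^ 2 * bmin⁻¹ * r)) * μ
        ≤ 4 * (2 * (A ^ 2 * (β * α * r ^ 2) * r)) * μ := by gcongr
      _ = 4 * (A ^ 2 * r ^ 2) * β * α * (2 * r * μ) := by ring
      _ ≤ 4 * (A ^ 2 * r ^ 2) * β * α := mul_le_of_le_one_right (by positivity) hμr
  calc _ ≤ 4 * (A ^ 2 * r ^ 2) * (2 + β) / μ + 4 * (A ^ 2 * r ^ 2) * β / μ :=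
        add_le_add hkinetic hmemory
    _ = _ := by ring

def effectiveGenerator (a : E →L[ℂ] F) (b : F →L[ℂ] F) (z : ℂ) : E →L[ℂ] E :=
  (ContinuousLinearMap.adjoint a).comp ((Ring.inverse (b - z • (1 : F →L[ℂ] F))).comp a)

section Network

variable {a : E →L[ℂ] F} {b : F →L[ℂ] F} {μ : ℝ}

theorem effectiveGenerator_zero :
    effectiveGenerator a b 0 = (ContinuousLinearMap.adjoint a).comp ((Ring.inverse b).comp a) := by
  simp [effectiveGenerator]

theorem resolventDiff_eq (z : ℂ) :
    resolventDiff a b z = Ring.inverse (z • 1 - effectiveGenerator a b z) -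
      Ring.inverse (z • 1 - effectiveGenerator a b 0) := by
  rw [effectiveGenerator_zero]
  rfl

theorem continuous_resolventDiff_comp {X : Type*} [TopologicalSpace X] {γ : X → ℂ}
    (hγ : Continuous γ) (hb : ∀ x, IsUnit (b - γ x • 1))
    (hX : ∀ x, IsUnit (γ x • 1 - effectiveGenerator a b (γ x)))
    (hY : ∀ x, IsUnit (γ x • 1 - effectiveGenerator a b 0)) :
    Continuous fun x => resolventDiff a b (γ x) := by
  have hG : Continuous fun x => effectiveGenerator a b (γ x) :=
    continuous_const.clm_comp
      (((continuous_const.sub (hγ.smul continuous_const)).ringInverse hb).clm_comp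
        continuous_const)
  simp only [resolventDiff_eq]
  exact (((hγ.smul continuous_const).sub hG).ringInverse hX).sub
    (((hγ.smul continuous_const).sub continuous_const).ringInverse hY)

theorem norm_effectiveGenerator_sub_le (hb : IsUnit b) {z : ℂ} (hbz : IsUnit (b - z • 1)) :
    ‖effectiveGenerator a b z - effectiveGenerator a b 0‖ ≤
      ‖a‖ ^ 2 * (‖Ring.inverse (b - z • 1)‖ * ‖z‖ * ‖Ring.inverse b‖) := by
  have hdiff : effectiveGenerator a b z - effectiveGenerator a b 0 =
      (ContinuousLinearMap.adjoint a).comp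
        ((Ring.inverse (b - z • 1) - Ring.inverse b).comp a) := by
    rw [effectiveGenerator_zero, effectiveGenerator, ContinuousLinearMap.sub_comp,
      ContinuousLinearMap.comp_sub]
  rw [hdiff]
  refine (ContinuousLinearMap.norm_adjoint_comp_comp_le_s9 a _).trans ?_
  gcongr
  refine (norm_ringInverse_sub_ringInverse_le hbz hb).trans ?_
  rw [sub_sub_cancel]
  gcongr
  exact ContinuousLinearMap.norm_smul_one_le_s9 z

theorem norm_effectiveGenerator_sub_le_of_norm_le (hb : IsUnit b) (hr : 0 < ‖Ring.inverse b‖)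
    {z : ℂ} (hz : ‖z‖ ≤ ‖Ring.inverse b‖⁻¹ / 2) :
    ‖effectiveGenerator a b z - effectiveGenerator a b 0‖ ≤
      2 * (‖a‖ ^ 2 * ‖Ring.inverse b‖ ^ 2) * ‖z‖ := by
  obtain ⟨hbz, hbzn⟩ :=
    ContinuousLinearMap.isUnit_sub_smul_one_and_norm_ringInverse_le hb hr hz
  refine (norm_effectiveGenerator_sub_le hb hbz).trans ?_
  calc ‖a‖ ^ 2 * (‖Ring.inverse (b - z • 1)‖ * ‖z‖ * ‖Ring.inverse b‖)
      ≤ ‖a‖ ^ 2 * (2 * ‖Ring.inverse b‖ * ‖z‖ * ‖Ring.inverse b‖) := by gcongr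
    _ = 2 * (‖a‖ ^ 2 * ‖Ring.inverse b‖ ^ 2) * ‖z‖ := by ring

theorem norm_inv_smul_resolventDiff_le {z : ℂ} (hX : IsUnit (z • 1 - effectiveGenerator a b z))
    (hY : IsUnit (z • 1 - effectiveGenerator a b 0)) {p d q : ℝ}
    (hXp : ‖Ring.inverse (z • 1 - effectiveGenerator a b z)‖ ≤ p)
    (hd : ‖effectiveGenerator a b z - effectiveGenerator a b 0‖ ≤ d * ‖z‖) (hd0 : 0 ≤ d)
    (hYq : ‖Ring.inverse (z • 1 - effectiveGenerator a b 0)‖ ≤ q) :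
    ‖z⁻¹ • resolventDiff a b z‖ ≤ p * d * q := by
  have hp : 0 ≤ p := (norm_nonneg _).trans hXp
  have hq : 0 ≤ q := (norm_nonneg _).trans hYq
  have hS := norm_ringInverse_sub_ringInverse_le hX hY
  rw [sub_sub_sub_cancel_left] at hS
  rw [norm_smul, norm_inv, resolventDiff_eq]
  calc ‖z‖⁻¹ * ‖Ring.inverse (z • 1 - effectiveGenerator a b z) -
        Ring.inverse (z • 1 - effectiveGenerator a b 0)‖
      ≤ ‖z‖⁻¹ * (p * (d * ‖z‖) * q) := by gcongr; exact hS.trans (by gcongr)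
    _ = ‖z‖⁻¹ * ‖z‖ * (p * d * q) := by ring
    _ ≤ p * d * q := mul_le_of_le_one_left (by positivity) inv_mul_le_one

theorem isUnit_smul_one_sub_effectiveGenerator_of_abs_le (hb : IsUnit b)
    (hN : IsSelfAdjoint (effectiveGenerator a b 0)) (hμ : 0 < μ)
    (hNneg : ∀ v : E, (inner ℂ v (effectiveGenerator a b 0 v) : ℂ).re ≤ -μ * ‖v‖ ^ 2)
    (hr : 0 < ‖Ring.inverse b‖) (hκ : 8 * (‖a‖ ^ 2 * ‖Ring.inverse b‖ ^ 2) ≤ 1) {y : ℝ}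
    (hy : |y| ≤ ‖Ring.inverse b‖⁻¹ / 2) :
    IsUnit ((Complex.I * y) • 1 - effectiveGenerator a b (Complex.I * y)) ∧
      ‖Ring.inverse ((Complex.I * y) • 1 - effectiveGenerator a b (Complex.I * y))‖ ≤
        (3 / 4 * max μ |y|)⁻¹ := by
  have hz : ‖Complex.I * y‖ = |y| := by simp
  have hzim : (Complex.I * y).im = y := by simp
  have hlowY := ContinuousLinearMap.mul_norm_le_norm_apply_of_mul_norm_sq_le_norm_inner
    (hN.max_mul_norm_sq_le_norm_inner_smul_one_sub_apply hNneg (z := Complex.I * y) (by simp))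
  have hD := norm_effectiveGenerator_sub_le_of_norm_le hb hr (a := a) (hz ▸ hy)
  rw [hzim] at hlowY
  rw [hz] at hD
  have hlowX := ContinuousLinearMap.mul_norm_le_norm_sub_apply hlowY (m' := 3 / 4 * max μ |y|)
    (hD.trans (by nlinarith [le_max_right μ |y|, abs_nonneg y]))
  rw [sub_sub_sub_cancel_right] at hlowX
  have hpos : 0 < 3 / 4 * max μ |y| := by positivity
  exact ⟨ContinuousLinearMap.isUnit_of_mul_norm_le_norm_apply hpos hlowX,
    ContinuousLinearMap.norm_ringInverse_le_of_mul_norm_le_norm_apply hpos hlowX⟩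

theorem isUnit_smul_one_sub_effectiveGenerator (hb : IsUnit b)
    (hN : IsSelfAdjoint (effectiveGenerator a b 0)) (hμ : 0 < μ)
    (hNneg : ∀ v : E, (inner ℂ v (effectiveGenerator a b 0 v) : ℂ).re ≤ -μ * ‖v‖ ^ 2)
    (hκ : 8 * (‖a‖ ^ 2 * ‖Ring.inverse b‖ ^ 2) ≤ 1) {α : ℝ} (hα : 0 < α)
    (hαr : α ≤ ‖Ring.inverse b‖⁻¹ / 2)
    (hNz : ∀ z : ℂ, 0 ≤ z.re → ‖effectiveGenerator a b z‖ ≤ α / 2) (y : ℝ) :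
    IsUnit ((Complex.I * y) • 1 - effectiveGenerator a b (Complex.I * y)) := by
  have hr : 0 < ‖Ring.inverse b‖ := inv_pos.mp (by linarith)
  have hz : ‖Complex.I * y‖ = |y| := by simp
  rcases le_total |y| α with hy | hy
  · exact (isUnit_smul_one_sub_effectiveGenerator_of_abs_le hb hN hμ hNneg hr hκ
      (hy.trans hαr)).1
  · refine (ContinuousLinearMap.isUnit_smul_one_sub_and_norm_ringInverse_le ?_
      ((hNz _ (by simp)).trans ?_)).1
    · simpa using (hα.trans_le hy).ne'
    · rw [hz]; linarith

theorem norm_inv_smul_resolventDiff_le_inv_max_sq (hb : IsUnit b)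
    (hN : IsSelfAdjoint (effectiveGenerator a b 0)) (hμ : 0 < μ)
    (hNneg : ∀ v : E, (inner ℂ v (effectiveGenerator a b 0 v) : ℂ).re ≤ -μ * ‖v‖ ^ 2)
    (hκ : 8 * (‖a‖ ^ 2 * ‖Ring.inverse b‖ ^ 2) ≤ 1) {α bmin : ℝ} (hα : 0 < α)
    (hαr : α ≤ ‖Ring.inverse b‖⁻¹ / 2) (hbmin : 0 < bmin)
    (hres : ∀ z : ℂ, 0 ≤ z.re → IsUnit (b - z • (1 : F →L[ℂ] F)) ∧
      ‖Ring.inverse (b - z • (1 : F →L[ℂ] F))‖ ≤ bmin⁻¹)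
    (hNz : ∀ z : ℂ, 0 ≤ z.re → ‖effectiveGenerator a b z‖ ≤ α / 2) (y : ℝ) :
    ‖(Complex.I * y)⁻¹ • resolventDiff a b (Complex.I * y)‖ ≤
      8 / 3 * (‖a‖ ^ 2 * ‖Ring.inverse b‖ ^ 2) * (max μ |y|)⁻¹ ^ 2 +
        2 * (‖a‖ ^ 2 * bmin⁻¹ * ‖Ring.inverse b‖) * (max α |y|)⁻¹ ^ 2 := by
  have hr : 0 < ‖Ring.inverse b‖ := inv_pos.mp (by linarith)
  have hz : ‖Complex.I * y‖ = |y| := by simp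
  have hzre : 0 ≤ (Complex.I * y).re := by simp
  have hzim : (Complex.I * y).im = y := by simp
  obtain ⟨hYu, hYn⟩ := hN.isUnit_smul_one_sub hμ hNneg hzre
  rw [hzim] at hYn
  have hM : 0 < max μ |y| := lt_max_of_lt_left hμ
  rcases le_total |y| α with hy | hy
  · obtain ⟨hXu, hXn⟩ :=
      isUnit_smul_one_sub_effectiveGenerator_of_abs_le hb hN hμ hNneg hr hκ (hy.trans hαr)
    have hD := norm_effectiveGenerator_sub_le_of_norm_le hb hr (a := a) (hz ▸ hy.trans hαr)
    calc _ ≤ (3 / 4 * max μ |y|)⁻¹ * (2 * (‖a‖ ^ 2 * ‖Ring.inverse b‖ ^ 2)) * (max μ |y|)⁻¹ :=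
          norm_inv_smul_resolventDiff_le hXu hYu hXn hD (by positivity) hYn
      _ = 8 / 3 * (‖a‖ ^ 2 * ‖Ring.inverse b‖ ^ 2) * (max μ |y|)⁻¹ ^ 2 := by ring
      _ ≤ _ := le_add_of_nonneg_right (by positivity)
  · have hy0 : 0 < |y| := hα.trans_le hy
    obtain ⟨hXu, hXn⟩ :=
      ContinuousLinearMap.isUnit_smul_one_sub_and_norm_ringInverse_le (z := Complex.I * y)
      (by simpa using hy0.ne') ((hNz _ hzre).trans (by rw [hz]; linarith))
    obtain ⟨hbz, hbzn⟩ := hres _ hzre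
    have hD : ‖effectiveGenerator a b (Complex.I * y) - effectiveGenerator a b 0‖ ≤
        (‖a‖ ^ 2 * bmin⁻¹ * ‖Ring.inverse b‖) * ‖Complex.I * y‖ :=
      calc _ ≤ ‖a‖ ^ 2 * (‖Ring.inverse (b - (Complex.I * y) • 1)‖ * ‖Complex.I * y‖ *
              ‖Ring.inverse b‖) := norm_effectiveGenerator_sub_le hb hbz
        _ ≤ ‖a‖ ^ 2 * (bmin⁻¹ * ‖Complex.I * y‖ * ‖Ring.inverse b‖) := by gcongr
        _ = _ := by ring
    calc _ ≤ (|y| / 2)⁻¹ * (‖a‖ ^ 2 * bmin⁻¹ * ‖Ring.inverse b‖) * |y|⁻¹ :=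
          norm_inv_smul_resolventDiff_le hXu hYu (hz ▸ hXn) hD (by positivity)
            (hYn.trans (inv_anti₀ hy0 (le_max_right _ _)))
      _ = 2 * (‖a‖ ^ 2 * bmin⁻¹ * ‖Ring.inverse b‖) * (max α |y|)⁻¹ ^ 2 := by
          rw [max_eq_right hy]; ring
      _ ≤ _ := le_add_of_nonneg_left (by positivity)

end Network

theorem relaxation_time_integral_bound_general
    [Nontrivial E]
    (a : E →L[ℂ] F) (b : F →L[ℂ] F) (hb : IsUnit b)
    (N : E →L[ℂ] E)
    (hN : N = (ContinuousLinearMap.adjoint a).comp ((Ring.inverse b).comp a))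
    (hNsa : IsSelfAdjoint N)
    (μ : ℝ) (hμ : 0 < μ)
    (hNneg : ∀ v : E, (inner ℂ v (N v) : ℂ).re ≤ -μ * ‖v‖ ^ 2)
    (κ α : ℝ) (hκ : κ = ‖a‖ ^ 2 * ‖Ring.inverse b‖ ^ 2)
    (hα : α = min (‖Ring.inverse b‖⁻¹ / 2) (μ / (4 * κ)))
    (bmin : ℝ) (hbmin : 0 < bmin)
    (hres : ∀ z : ℂ, 0 ≤ z.re → IsUnit (b - z • (1 : F →L[ℂ] F)) ∧
      ‖Ring.inverse (b - z • (1 : F →L[ℂ] F))‖ ≤ bmin⁻¹)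
    (hNα : ‖(ContinuousLinearMap.adjoint a).comp ((Ring.inverse b).comp a)‖ ≤ α / 2)
    (hNzα : ∀ z : ℂ, 0 ≤ z.re →
      ‖(ContinuousLinearMap.adjoint a).comp
        ((Ring.inverse (b - z • (1 : F →L[ℂ] F))).comp a)‖ ≤ α / 2)
    (β : ℝ) (hβ : β = max 1 (1 / (α * bmin * ‖Ring.inverse b‖ ^ 2))) :
    Integrable (fun y : ℝ =>
      ((Complex.I * y)⁻¹) • resolventDiff a b (Complex.I * y)) volume ∧
    ‖(1 / (2 * Real.pi)) •
        ∫ y : ℝ, ((Complex.I * y)⁻¹) • resolventDiff a b (Complex.I * y)‖ ≤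
      (4 / Real.pi) * κ * μ⁻¹ * (1 + β) := by
  subst hN hκ hβ
  rw [← effectiveGenerator_zero] at hNsa hNneg hNα
  have hμα : μ ≤ α / 2 := (ContinuousLinearMap.le_opNorm_of_re_inner_le hNneg).trans hNα
  have hα0 : 0 < α := by linarith
  have hαr : α ≤ ‖Ring.inverse b‖⁻¹ / 2 := hα ▸ min_le_left _ _
  have hκ : 8 * (‖a‖ ^ 2 * ‖Ring.inverse b‖ ^ 2) ≤ 1 := by
    have hακ := mul_le_of_le_div₀ hμ.le (by positivity) (hα ▸ min_le_right _ _)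
    nlinarith [mul_nonneg (sq_nonneg ‖a‖) (sq_nonneg ‖Ring.inverse b‖)]
  have hmeas : AEStronglyMeasurable
      (fun y : ℝ => (Complex.I * y)⁻¹ • resolventDiff a b (Complex.I * y)) volume :=
    (by fun_prop : Measurable fun y : ℝ => (Complex.I * y)⁻¹).aestronglyMeasurable.smul
      (continuous_resolventDiff_comp (by fun_prop) (fun y => (hres _ (by simp)).1)
        (isUnit_smul_one_sub_effectiveGenerator hb hNsa hμ hNneg hκ hα0 hαr hNzα)
        (fun y => (hNsa.isUnit_smul_one_sub hμ hNneg (by simp)).1)).aestronglyMeasurable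
  obtain ⟨hint, hnorm⟩ := integrable_and_norm_integral_le_of_norm_le_inv_max_sq hmeas hμ hα0
    (norm_inv_smul_resolventDiff_le_inv_max_sq hb hNsa hμ hNneg hκ hα0 hαr hbmin hres hNzα)
  refine ⟨hint, ?_⟩
  rw [norm_smul, Real.norm_of_nonneg (by positivity)]
  calc _ ≤ 1 / (2 * Real.pi) * (8 * (‖a‖ ^ 2 * ‖Ring.inverse b‖ ^ 2) / μ *
        (1 + max 1 (1 / (α * bmin * ‖Ring.inverse b‖ ^ 2)))) := by
        gcongr
        exact hnorm.trans (relaxation_constant_le (inv_pos.mp (by linarith)) hbmin hμ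
          (by linarith) hαr (le_max_left _ _) (le_max_right _ _))
    _ = _ := by field_simp; ring

/-- **Relaxation-time difference bound via the contour integral along the imaginary axis.** -/
theorem relaxation_time_integral_bound
    [Nontrivial E] [Nontrivial F]
    (a : E →L[ℂ] F) (b : F →L[ℂ] F) (hb : IsUnit b)
    (N : E →L[ℂ] E)
    (hN : N = (ContinuousLinearMap.adjoint a).comp ((Ring.inverse b).comp a))
    (hNsa : IsSelfAdjoint N)
    (μ : ℝ) (hμ : 0 < μ)
    (hNneg : ∀ v : E, (inner ℂ v (N v) : ℂ).re ≤ -μ * ‖v‖ ^ 2)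
    (κ α : ℝ) (hκ : κ = ‖a‖ ^ 2 * ‖Ring.inverse b‖ ^ 2)
    (hα : α = min (‖Ring.inverse b‖⁻¹ / 2) (μ / (4 * κ)))
    (hμα : μ ≤ α)
    (bmin : ℝ) (hbmin : 0 < bmin)
    (hres : ∀ z : ℂ, 0 ≤ z.re → IsUnit (b - z • (1 : F →L[ℂ] F)) ∧
      ‖Ring.inverse (b - z • (1 : F →L[ℂ] F))‖ ≤ bmin⁻¹)
    (hNα : ‖(ContinuousLinearMap.adjoint a).comp ((Ring.inverse b).comp a)‖ ≤ α / 2)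
    (hNzα : ∀ z : ℂ, 0 ≤ z.re →
      ‖(ContinuousLinearMap.adjoint a).comp
        ((Ring.inverse (b - z • (1 : F →L[ℂ] F))).comp a)‖ ≤ α / 2)
    (β : ℝ) (hβ : β = max 1 (1 / (α * bmin * ‖Ring.inverse b‖ ^ 2))) :
    Integrable (fun y : ℝ =>
      ((Complex.I * y)⁻¹) • resolventDiff a b (Complex.I * y)) volume ∧
    ‖(1 / (2 * Real.pi)) •
        ∫ y : ℝ, ((Complex.I * y)⁻¹) • resolventDiff a b (Complex.I * y)‖ ≤
      (4 / Real.pi) * κ * μ⁻¹ * (1 + β) :=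
  relaxation_time_integral_bound_general a b hb N hN hNsa μ hμ hNneg κ α hκ hα bmin hbmin hres hNα
    hNzα β hβ
end
end

section
/- Let E and F be nonzero finite-dimensional complex inner product spaces, let a : E → F be linear with adjoint a†, let b : F → F be linear and invertible, and let ν : F → F be linear with ‖ν‖ ≤ (1/2)‖b⁻¹‖⁻¹ (so b − ν is invertible). Set κ = ‖a‖²‖b⁻¹‖², let N := a†b⁻¹a and assume N is invertible with μ := ‖N⁻¹‖⁻¹, and assume 4κ‖ν‖ ≤ μ. Then N₀ := a†(b − ν)⁻¹a is invertible and ‖N⁻¹ − N₀⁻¹‖ ≤ 4κμ⁻²‖ν‖. -/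
lemma pert_aux {R : Type*} [NormedRing R] [CompleteSpace R] [NormOneClass R]
    (x d : R) (hx : IsUnit x) (h : ‖Ring.inverse x‖ * ‖d‖ ≤ 1 / 2) :
    IsUnit (x - d) ∧ ‖Ring.inverse (x - d)‖ ≤ 2 * ‖Ring.inverse x‖ := by
  set t := Ring.inverse x * d with ht_def
  have ht : ‖t‖ ≤ 1 / 2 := le_trans (norm_mul_le _ _) h
  have ht' : ‖t‖ < 1 := lt_of_le_of_lt ht (by norm_num)
  have hu : IsUnit (1 - t) := isUnit_one_sub_of_norm_lt_one ht'
  have hfac : x - d = x * (1 - t) := by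
    rw [mul_sub, mul_one, ht_def, ← mul_assoc, Ring.mul_inverse_cancel x hx, one_mul]
  have hunit : IsUnit (x - d) := hfac ▸ hx.mul hu
  refine ⟨hunit, ?_⟩
  have hinv : Ring.inverse (x - d) = Ring.inverse (1 - t) * Ring.inverse x := by
    rw [hfac]
    obtain ⟨u, hu1⟩ := hx
    obtain ⟨v, hv1⟩ := hu
    rw [← hu1, ← hv1, ← Units.val_mul, Ring.inverse_unit, Ring.inverse_unit,
      Ring.inverse_unit, mul_inv_rev, Units.val_mul]
  have hgeo : ‖Ring.inverse (1 - t)‖ ≤ 2 := by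
    rw [← geom_series_eq_inverse t ht']
    calc ‖∑' n : ℕ, t ^ n‖ ≤ ‖(1 : R)‖ - 1 + (1 - ‖t‖)⁻¹ :=
          tsum_geometric_le_of_norm_lt_one t ht'
      _ ≤ 2 := by
          rw [norm_one]
          have h1 : (2:ℝ)⁻¹ ≤ 1 - ‖t‖ := by linarith
          have h2 : (1 - ‖t‖)⁻¹ ≤ 2 := by
            rw [← inv_inv (2:ℝ)]
            exact inv_anti₀ (by norm_num) h1
          linarith
  calc ‖Ring.inverse (x - d)‖ ≤ ‖Ring.inverse (1 - t)‖ * ‖Ring.inverse x‖ := by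
        rw [hinv]; exact norm_mul_le _ _
    _ ≤ 2 * ‖Ring.inverse x‖ := mul_le_mul_of_nonneg_right hgeo (norm_nonneg _)

lemma inv_diff {R : Type*} [Ring R] (x y : R) (hx : IsUnit x) (hy : IsUnit y) :
    Ring.inverse x - Ring.inverse y = Ring.inverse x * (y - x) * Ring.inverse y := by
  rw [mul_sub, sub_mul, mul_assoc, Ring.mul_inverse_cancel y hy, mul_one,
    Ring.inverse_mul_cancel x hx, one_mul]

lemma inv_norm_pos {R : Type*} [NormedRing R] [NormOneClass R] {x : R} (hx : IsUnit x) :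
    0 < ‖Ring.inverse x‖ := by
  rw [norm_pos_iff]
  intro h0
  have h1 := Ring.mul_inverse_cancel x hx
  rw [h0, mul_zero] at h1
  have := congrArg norm h1
  rw [norm_zero, norm_one] at this
  norm_num at this

/-- **Relaxation-time difference between the kinetic networks `N` and `N₀`.**
With `b = b₀ + ν`, `N = a†b⁻¹a` and `N₀ = a†(b−ν)⁻¹a = a†b₀⁻¹a`, if
`‖ν‖ ≤ (1/2)‖b⁻¹‖⁻¹` and `4κ‖ν‖ ≤ μ` where `κ = ‖a‖²‖b⁻¹‖²` and `μ = ‖N⁻¹‖⁻¹`, then `N₀`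
is invertible and `‖N⁻¹ − N₀⁻¹‖ ≤ 4κμ⁻²‖ν‖`. -/
theorem kinetic_networks_inverse_difference_bound
    (E F : Type*) [NormedAddCommGroup E] [InnerProductSpace ℂ E]
    [FiniteDimensional ℂ E] [Nontrivial E]
    [NormedAddCommGroup F] [InnerProductSpace ℂ F]
    [FiniteDimensional ℂ F] [Nontrivial F]
    (a : E →L[ℂ] F) (b ν : F →L[ℂ] F) (hb : IsUnit b)
    (hν : ‖ν‖ ≤ (1 / 2) * ‖Ring.inverse b‖⁻¹)
    (κ : ℝ) (hκ : κ = ‖a‖ ^ 2 * ‖Ring.inverse b‖ ^ 2)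
    (N : E →L[ℂ] E)
    (hN : N = (ContinuousLinearMap.adjoint a).comp ((Ring.inverse b).comp a))
    (hNunit : IsUnit N)
    (μ : ℝ) (hμ : μ = ‖Ring.inverse N‖⁻¹)
    (hκν : 4 * κ * ‖ν‖ ≤ μ) :
    IsUnit (b - ν) ∧
    IsUnit ((ContinuousLinearMap.adjoint a).comp ((Ring.inverse (b - ν)).comp a)) ∧
    ‖Ring.inverse N -
        Ring.inverse ((ContinuousLinearMap.adjoint a).comp
          ((Ring.inverse (b - ν)).comp a))‖ ≤ 4 * κ * (μ ^ 2)⁻¹ * ‖ν‖ := by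
  have hbinv_pos : 0 < ‖Ring.inverse b‖ := inv_norm_pos hb
  -- step 1: b - ν is a unit, with inverse bounded by 2‖b⁻¹‖
  have hνb : ‖Ring.inverse b‖ * ‖ν‖ ≤ 1 / 2 := by
    have h1 := mul_le_mul_of_nonneg_left hν (norm_nonneg (Ring.inverse b))
    have h2 : ‖Ring.inverse b‖ * (1 / 2 * ‖Ring.inverse b‖⁻¹) = 1 / 2 := by
      field_simp
    linarith
  obtain ⟨hbν, hbν_norm⟩ := pert_aux b ν hb hνb
  refine ⟨hbν, ?_⟩
  set N₀ : E →L[ℂ] E :=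
    (ContinuousLinearMap.adjoint a).comp ((Ring.inverse (b - ν)).comp a) with hN₀
  -- difference of the resolvents of b
  set D : F →L[ℂ] F := Ring.inverse b - Ring.inverse (b - ν) with hD
  have hD_eq : D = Ring.inverse b * (-ν) * Ring.inverse (b - ν) := by
    rw [hD, inv_diff b (b - ν) hb hbν]
    congr 1
    congr 1
    abel
  have hD_norm : ‖D‖ ≤ 2 * ‖Ring.inverse b‖ ^ 2 * ‖ν‖ := by
    calc ‖D‖ ≤ ‖Ring.inverse b * (-ν)‖ * ‖Ring.inverse (b - ν)‖ := by
          rw [hD_eq]; exact norm_mul_le _ _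
      _ ≤ (‖Ring.inverse b‖ * ‖ν‖) * (2 * ‖Ring.inverse b‖) := by
          apply mul_le_mul _ hbν_norm (norm_nonneg _)
            (by positivity)
          · calc ‖Ring.inverse b * (-ν)‖ ≤ ‖Ring.inverse b‖ * ‖(-ν)‖ := norm_mul_le _ _
              _ = ‖Ring.inverse b‖ * ‖ν‖ := by rw [norm_neg]
      _ = 2 * ‖Ring.inverse b‖ ^ 2 * ‖ν‖ := by ring
  -- the perturbation of N
  have hd_eq : N - N₀ = (ContinuousLinearMap.adjoint a).comp (D.comp a) := by
    rw [hN, hN₀, hD, ContinuousLinearMap.sub_comp, ContinuousLinearMap.comp_sub]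
  have hd_norm : ‖N - N₀‖ ≤ 2 * κ * ‖ν‖ := by
    have h1 : ‖N - N₀‖ ≤ ‖ContinuousLinearMap.adjoint a‖ * (‖D‖ * ‖a‖) := by
      rw [hd_eq]
      exact le_trans (ContinuousLinearMap.opNorm_comp_le _ _)
        (mul_le_mul_of_nonneg_left (ContinuousLinearMap.opNorm_comp_le _ _) (norm_nonneg _))
    have hadj : ‖ContinuousLinearMap.adjoint a‖ = ‖a‖ :=
      ContinuousLinearMap.adjoint.norm_map a
    rw [hadj] at h1
    have h2 : ‖a‖ * (‖D‖ * ‖a‖) ≤ ‖a‖ * ((2 * ‖Ring.inverse b‖ ^ 2 * ‖ν‖) * ‖a‖) := by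
      apply mul_le_mul_of_nonneg_left _ (norm_nonneg a)
      exact mul_le_mul_of_nonneg_right hD_norm (norm_nonneg a)
    have h3 : ‖a‖ * ((2 * ‖Ring.inverse b‖ ^ 2 * ‖ν‖) * ‖a‖) = 2 * κ * ‖ν‖ := by
      rw [hκ]; ring
    linarith
  -- μ is positive
  have hNinv_pos : 0 < ‖Ring.inverse N‖ := inv_norm_pos hNunit
  have hμ_pos : 0 < μ := by rw [hμ]; positivity
  have hNinv_norm : ‖Ring.inverse N‖ = μ⁻¹ := by rw [hμ, inv_inv]
  -- apply the perturbation lemma to N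
  have hκ_nonneg : 0 ≤ κ := by rw [hκ]; positivity
  have hd_half : 2 * κ * ‖ν‖ ≤ μ / 2 := by linarith
  have hNd : ‖Ring.inverse N‖ * ‖N - N₀‖ ≤ 1 / 2 := by
    rw [hNinv_norm]
    have h1 : μ⁻¹ * ‖N - N₀‖ ≤ μ⁻¹ * (μ / 2) :=
      mul_le_mul_of_nonneg_left (le_trans hd_norm hd_half) (by positivity)
    have h2 : μ⁻¹ * (μ / 2) = 1 / 2 := by field_simp
    linarith
  obtain ⟨hN₀unit, hN₀norm⟩ := pert_aux N (N - N₀) hNunit hNd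
  rw [sub_sub_cancel] at hN₀unit hN₀norm
  refine ⟨hN₀unit, ?_⟩
  have hdiff : Ring.inverse N - Ring.inverse N₀ =
      Ring.inverse N * (N₀ - N) * Ring.inverse N₀ := inv_diff N N₀ hNunit hN₀unit
  calc ‖Ring.inverse N - Ring.inverse N₀‖
      ≤ ‖Ring.inverse N * (N₀ - N)‖ * ‖Ring.inverse N₀‖ := by
        rw [hdiff]; exact norm_mul_le _ _
    _ ≤ (μ⁻¹ * (2 * κ * ‖ν‖)) * (2 * μ⁻¹) := by
        apply mul_le_mul _ (by rwa [hNinv_norm] at hN₀norm) (norm_nonneg _) (by positivity)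
        calc ‖Ring.inverse N * (N₀ - N)‖ ≤ ‖Ring.inverse N‖ * ‖N₀ - N‖ := norm_mul_le _ _
          _ ≤ μ⁻¹ * (2 * κ * ‖ν‖) := by
              rw [hNinv_norm, norm_sub_rev]
              exact mul_le_mul_of_nonneg_left hd_norm (by positivity)
    _ = 4 * κ * (μ ^ 2)⁻¹ * ‖ν‖ := by
        rw [pow_two, mul_inv]; ring
end
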